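/- arXiv:1705.08033 — 6 statements merged into one kernel-verified Lean document; each statement's English description precedes it below -/
import Mathlib

section
/- For every society consisting of at least two pairwise disjoint communities (each community containing at least one man and at least one woman), there exists a strict preference profile such that no stable matching scheme is weakly integration monotonic; that is, for every matching scheme σ such that σ(·,P) is a stable matching for every population P, there exists an agent x who strictly prefers σ(x,C_x) to σ(x,S), where C_x is x's community and S is the full society. Equivalently, no stable matching mechanism is weakly integration monotonic. -/
/-- A strict preference profile: each agent `x` has a strict total order over
agents of the opposite gender, and prefers any such partner to being unmatched
(i.e. to "obtaining" him/herself). `pref x a b` means `x` strictly prefers `a` to `b`. -/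
structure Prefs (Agent : Type) (man : Agent → Bool) where
  pref : Agent → Agent → Agent → Prop
  irrefl : ∀ x a, ¬ pref x a a
  trans : ∀ x a b c, pref x a b → pref x b c → pref x a c
  total : ∀ x a b, man a ≠ man x → man b ≠ man x → a ≠ b → pref x a b ∨ pref x b a
  worst : ∀ x a, man a ≠ man x → pref x a x

/-- `x` weakly prefers `a` to `b`. -/
def Prefs.weakPref {Agent : Type} {man : Agent → Bool} (P : Prefs Agent man)
    (x a b : Agent) : Prop := a = b ∨ P.pref x a b

/-- A matching on the set of agents `A`: a function of order two matching
men only to women (or to themselves, meaning unmatched), fixing agents outside `A`. -/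
structure IsMatching {Agent : Type} (man : Agent → Bool) (A : Set Agent)
    (μ : Agent → Agent) : Prop where
  mem : ∀ x ∈ A, μ x ∈ A
  invol : ∀ x ∈ A, μ (μ x) = x
  opp : ∀ x ∈ A, μ x ≠ x → man (μ x) ≠ man x
  fix : ∀ x ∉ A, μ x = x

/-- A matching is stable if there is no blocking pair: a man `m` and a woman `w`,
not married to each other, each strictly preferring the other to their own partner. -/
def IsStable {Agent : Type} {man : Agent → Bool} (P : Prefs Agent man)
    (A : Set Agent) (μ : Agent → Agent) : Prop :=
  IsMatching man A μ ∧
    ¬ ∃ m ∈ A, ∃ w ∈ A, man m ≠ man w ∧ μ m ≠ w ∧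
      P.pref m w (μ m) ∧ P.pref w m (μ w)

/-- A matching is Pareto optimal if no matching on the same agents makes every
agent weakly better off and some agent strictly better off. -/
def IsPareto {Agent : Type} {man : Agent → Bool} (P : Prefs Agent man)
    (A : Set Agent) (μ : Agent → Agent) : Prop :=
  IsMatching man A μ ∧
    ¬ ∃ μ' : Agent → Agent, IsMatching man A μ' ∧
      (∀ x ∈ A, P.weakPref x (μ' x) (μ x)) ∧
      ∃ y ∈ A, P.pref y (μ' y) (μ y)

/-!
Fix a man `m` and a woman `w` of one community and a woman `w'` of another. Let `m` rank `w'`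
first and `w` second, and let both women rank `m` first. Mutual favourites among the agents present
are matched in every stable matching, so `m` marries `w` when his community is alone but `w'` in the
whole society; `w` thereby loses her favourite partner through integration.
-/

def Prefs.ofKey {Agent : Type} {man : Agent → Bool} {α : Type*} [LinearOrder α]
    (key : Agent → Agent → α) (hkey : ∀ x, Function.Injective (key x))
    (hself : ∀ x a, man a ≠ man x → key x a < key x x) : Prefs Agent man where
  pref x a b := key x a < key x b
  irrefl _ _ := lt_irrefl _
  trans _ _ _ _ := lt_trans
  total x _ _ _ _ hab := lt_or_gt_of_ne ((hkey x).ne hab)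
  worst := hself

section Stability

variable {Agent : Type} {man : Agent → Bool} {A : Set Agent} {μ : Agent → Agent}

theorem IsMatching.apply_eq_of_apply_eq (hμ : IsMatching man A μ) {x y : Agent} (hx : x ∈ A)
    (h : μ x = y) : μ y = x :=
  h ▸ hμ.invol x hx

theorem IsStable.apply_eq_of_prefer_each_other {P : Prefs Agent man} (hμ : IsStable P A μ)
    {m w : Agent} (hm : m ∈ A) (hw : w ∈ A) (hmw : man m ≠ man w)
    (hm_w : ∀ a ∈ A, a ≠ w → P.pref m w a) (hw_m : ∀ a ∈ A, a ≠ m → P.pref w m a) :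
    μ m = w := by
  by_contra hne
  have hne' : μ w ≠ m := fun h => hne (hμ.1.apply_eq_of_apply_eq hw h)
  exact hμ.2 ⟨m, hm, w, hw, hmw, hne, hm_w _ (hμ.1.mem m hm) hne, hw_m _ (hμ.1.mem w hw) hne'⟩

end Stability

section Counterexample

variable {Agent : Type} {man : Agent → Bool}

open Classical in
noncomputable def favoriteTier (m w w' x a : Agent) : ℕ :=
  if a = x then 3
  else if x = m ∧ a = w' then 0
  else if x = m ∧ a = w then 1
  else if (x = w ∨ x = w') ∧ a = m then 0
  else 2

theorem exists_prefs_favoring {m w w' : Agent} (hmw : m ≠ w) (hmw' : m ≠ w') :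
    ∃ P : Prefs Agent man,
      (∀ a ≠ w', P.pref m w' a) ∧ (∀ a ≠ w, a ≠ w' → P.pref m w a) ∧
      (∀ a ≠ m, P.pref w m a) ∧ (∀ a ≠ m, P.pref w' m a) := by
  let key (x a : Agent) : ℕ ×ₗ Cardinal := toLex (favoriteTier m w w' x a, embeddingToCardinal a)
  have key_lt {x a b : Agent} (h : favoriteTier m w w' x a < favoriteTier m w w' x b) :
      key x a < key x b :=
    Prod.Lex.toLex_lt_toLex.2 (Or.inl h)
  refine ⟨Prefs.ofKey key (fun x a b h => embeddingToCardinal.injective (congrArg (·.2) h))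
    (fun x a hax => key_lt ?_), fun a ha => key_lt ?_, fun a ha ha' => key_lt ?_,
    fun a ha => key_lt ?_, fun a ha => key_lt ?_⟩
  all_goals grind [favoriteTier]

end Counterexample

theorem no_stable_scheme_is_weakly_integration_monotonic_general
    {Agent ι : Type} [Fintype ι]
    (man : Agent → Bool) (comm : Agent → ι)
    (hasMan : ∀ i : ι, ∃ x, comm x = i ∧ man x = true)
    (hasWoman : ∀ i : ι, ∃ x, comm x = i ∧ man x = false)
    (hκ : 2 ≤ Fintype.card ι) :
    ∃ P : Prefs Agent man,
      ∀ σ : Agent → Set ι → Agent,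
        (∀ Q : Set ι, IsStable P {x | comm x ∈ Q} (fun x => σ x Q)) →
        ∃ x : Agent, P.pref x (σ x {comm x}) (σ x Set.univ) := by
  obtain ⟨i, j, hij⟩ := Fintype.exists_pair_of_one_lt_card hκ
  obtain ⟨m, hmi, hm⟩ := hasMan i
  obtain ⟨w, hwi, hw⟩ := hasWoman i
  obtain ⟨w', hw'j, hw'⟩ := hasWoman j
  have hmw : man m ≠ man w := by simp [hm, hw]
  have hmw' : man m ≠ man w' := by simp [hm, hw']
  have hww' : w ≠ w' := fun h => hij (hwi ▸ hw'j ▸ congrArg comm h)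
  obtain ⟨P, hm_w', hm_w, hw_m, hw'_m⟩ :=
    exists_prefs_favoring (man := man) (ne_of_apply_ne man hmw) (ne_of_apply_ne man hmw')
  refine ⟨P, fun σ hσ => ⟨w, ?_⟩⟩
  have hlocal : σ m {i} = w :=
    (hσ {i}).apply_eq_of_prefer_each_other hmi hwi hmw
      (fun a ha haw => hm_w a haw (by rintro rfl; exact hij (ha.symm.trans hw'j)))
      (fun a _ => hw_m a)
  have hglobal : σ m Set.univ = w' :=
    (hσ Set.univ).apply_eq_of_prefer_each_other trivial trivial hmw'
      (fun a _ => hm_w' a) (fun a _ => hw'_m a)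
  rw [hwi, (hσ {i}).1.apply_eq_of_apply_eq hmi hlocal]
  exact hw_m _ fun h => hww' (hglobal ▸ (hσ Set.univ).1.apply_eq_of_apply_eq trivial h).symm

/-- **Proposition 1 (no stable matching mechanism is WIM).**
For every society consisting of at least two pairwise disjoint communities
(indexed by `ι`, each containing at least one man and at least one woman),
there exists a strict preference profile such that for every stable matching
scheme `σ` (i.e. `σ (·, Q)` is a stable matching on the agents of the
population `Q` for every population `Q`), some agent `x` strictly prefers
the partner obtained in x's own community `σ (x, {comm x})` to the partner
obtained in the full society `σ (x, Set.univ)`. -/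
theorem no_stable_scheme_is_weakly_integration_monotonic
    {Agent ι : Type} [Fintype Agent] [Fintype ι]
    (man : Agent → Bool) (comm : Agent → ι)
    (hasMan : ∀ i : ι, ∃ x, comm x = i ∧ man x = true)
    (hasWoman : ∀ i : ι, ∃ x, comm x = i ∧ man x = false)
    (hκ : 2 ≤ Fintype.card ι) :
    ∃ P : Prefs Agent man,
      ∀ σ : Agent → Set ι → Agent,
        (∀ Q : Set ι, IsStable P {x | comm x ∈ Q} (fun x => σ x Q)) →
        ∃ x : Agent, P.pref x (σ x {comm x}) (σ x Set.univ) :=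
  no_stable_scheme_is_weakly_integration_monotonic_general man comm hasMan hasWoman hκ
end

section
/- For any society and strict preference profile, and any stable matching scheme σ*, the number of agents x who strictly prefer their partner in their own community to their partner in the fully integrated society — i.e. |{x ∈ M^S ∪ W^S : σ*(x, C_x) ≻_x σ*(x, S)}| — is at most half of the total number of agents |M^S ∪ W^S| / 2. -/
/-
Let `μ` be the integrated matching and `ν x` the partner of `x` in its own community. Since the
communities partition society, `ν` is an involution. If `x` strictly prefers `ν x` to `μ x`, then
`ν x ≠ x` (nobody ranks themselves above a partner), and its partner `ν x` cannot also prefer `x`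
to `μ (ν x)`, or `x, ν x` would block `μ`. So `ν` maps the agents hurt by integration injectively
into those who are not, and at most half of society is hurt.
-/

variable {Agent : Type} {man : Agent → Bool}

theorem Prefs.pref_of_pref_of_weakPref (P : Prefs Agent man) {x a b c : Agent}
    (hab : P.pref x a b) (hbc : P.weakPref x b c) : P.pref x a c := by
  rcases hbc with rfl | hbc
  · exact hab
  · exact P.trans x a b c hab hbc

namespace IsMatching

variable {A : Set Agent} {μ : Agent → Agent}

theorem weakPref_self (hμ : IsMatching man A μ) (P : Prefs Agent man) {x : Agent} (hx : x ∈ A) :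
    P.weakPref x (μ x) x := by
  by_cases hfix : μ x = x
  · exact Or.inl hfix
  · exact Or.inr (P.worst x (μ x) (hμ.opp x hx hfix))

theorem ne_of_pref_partner (hμ : IsMatching man A μ) (P : Prefs Agent man) {x y : Agent}
    (hx : x ∈ A) (hy : P.pref x y (μ x)) : y ≠ x := by
  rintro rfl
  exact P.irrefl y y (P.pref_of_pref_of_weakPref hy (hμ.weakPref_self P hx))

end IsMatching

theorem IsStable.not_pref_of_pref {P : Prefs Agent man} {A : Set Agent} {μ : Agent → Agent}
    (hμ : IsStable P A μ) {x y : Agent} (hx : x ∈ A) (hy : y ∈ A) (hman : man x ≠ man y)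
    (hxy : P.pref x y (μ x)) : ¬ P.pref y x (μ y) := fun hyx =>
  hμ.2 ⟨x, hx, y, hy, hman, fun h => P.irrefl x y (h ▸ hxy), hxy, hyx⟩

theorem Function.Involutive.two_mul_card_le {α : Type} [Fintype α] {f : α → α}
    (hf : Function.Involutive f) (p : α → Prop) (hp : ∀ x, p x → ¬ p (f x)) :
    2 * Nat.card {x // p x} ≤ Fintype.card α := by
  classical
  have hinj : Nat.card {x // p x} ≤ Nat.card {x // ¬ p x} :=
    Nat.card_le_card_of_injective (fun y => ⟨f y.1, hp y.1 y.2⟩) fun a b hab =>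
      Subtype.ext (hf.injective (congrArg Subtype.val hab))
  have hsum : Nat.card {x // p x} + Nat.card {x // ¬ p x} = Fintype.card α := by
    simp only [Nat.card_eq_fintype_card]
    exact Fintype.card_subtype_compl p ▸ Nat.add_sub_cancel' (Fintype.card_subtype_le p)
  omega

theorem involutive_of_isMatching_communities {ι : Type} (comm : Agent → ι)
    (σ : Agent → Set ι → Agent)
    (hσ : ∀ i : ι, IsMatching man {x | comm x ∈ ({i} : Set ι)} (fun x => σ x {i})) :
    Function.Involutive (fun x => σ x {comm x}) := by
  intro x
  have hcomm : comm (σ x {comm x}) = comm x := (hσ (comm x)).mem x rfl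
  simp only [hcomm]
  exact (hσ (comm x)).invol x rfl

theorem stable_scheme_hurts_at_most_half_general
    {Agent ι : Type} [Fintype Agent]
    (man : Agent → Bool) (comm : Agent → ι)
    (P : Prefs Agent man)
    (σ : Agent → Set ι → Agent)
    (hσ : ∀ Q : Set ι, IsStable P {x | comm x ∈ Q} (fun x => σ x Q)) :
    2 * Nat.card {x : Agent // P.pref x (σ x {comm x}) (σ x Set.univ)} ≤
      Fintype.card Agent := by
  have hν := involutive_of_isMatching_communities comm σ fun i => (hσ {i}).1
  refine hν.two_mul_card_le _ fun x hx hνx => ?_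
  have hne : σ x {comm x} ≠ x := (hσ Set.univ).1.ne_of_pref_partner P trivial hx
  have hman : man (σ x {comm x}) ≠ man x := (hσ {comm x}).1.opp x rfl hne
  have hback : σ (σ x {comm x}) {comm (σ x {comm x})} = x := hν x
  rw [hback] at hνx
  exact (hσ Set.univ).not_pref_of_pref trivial trivial hman.symm hx hνx

/-- **Proposition 3 (stable schemes hurt at most half of society).**
For any society (communities indexed by `ι`, pairwise disjoint, each with at
least one man and one woman), any strict preference profile, and any stable
matching scheme `σ`, the number of agents who strictly prefer the partner
obtained in their own community to the partner obtained in the fully integrated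
society is at most half of the total number of agents. -/
theorem stable_scheme_hurts_at_most_half
    {Agent ι : Type} [Fintype Agent] [Fintype ι]
    (man : Agent → Bool) (comm : Agent → ι)
    (hasMan : ∀ i : ι, ∃ x, comm x = i ∧ man x = true)
    (hasWoman : ∀ i : ι, ∃ x, comm x = i ∧ man x = false)
    (P : Prefs Agent man)
    (σ : Agent → Set ι → Agent)
    (hσ : ∀ Q : Set ι, IsStable P {x | comm x ∈ Q} (fun x => σ x Q)) :
    2 * Nat.card {x : Agent // P.pref x (σ x {comm x}) (σ x Set.univ)} ≤
      Fintype.card Agent :=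
  stable_scheme_hurts_at_most_half_general man comm P σ hσ
end

section
/- Let μ be a stable matching and ν an arbitrary matching on the same finite set of men and women (with strict preferences, and every agent preferring any partner to being unmatched). Then the number of agents x who strictly prefer ν(x) to μ(x) is at most the number of agents y who strictly prefer μ(y) to ν(y). -/
/-! Every agent `x` who prefers `ν` to the stable matching `μ` is matched under `ν` to a partner
`ν x` who prefers `μ` to `ν`: otherwise `x` and `ν x` would block `μ`. Since `ν` is an involution,
`x ↦ ν x` is an injection from the first set of agents into the second. -/

section Matching

variable {Agent : Type} {man : Agent → Bool} {A : Set Agent} {μ : Agent → Agent}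

theorem IsMatching.involutive (hμ : IsMatching man A μ) : Function.Involutive μ := by
  intro x
  by_cases hx : x ∈ A
  · exact hμ.invol x hx
  · rw [hμ.fix x hx, hμ.fix x hx]

variable (P : Prefs Agent man)

theorem Prefs.ne_of_pref {x a b : Agent} (h : P.pref x a b) : a ≠ b := by
  rintro rfl
  exact P.irrefl x a h

theorem Prefs.not_pref_self_partner (hμ : IsMatching man A μ) {x : Agent} (hx : x ∈ A) :
    ¬ P.pref x x (μ x) := by
  intro h
  have hne : μ x ≠ x := (P.ne_of_pref h).symm
  exact P.irrefl x x (P.trans x x (μ x) x h (P.worst x (μ x) (hμ.opp x hx hne)))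

theorem Prefs.pref_partner_of_not_pref (hμ : IsMatching man A μ) {x a : Agent} (hx : x ∈ A)
    (hman : man a ≠ man x) (ha : μ x ≠ a) (hnot : ¬ P.pref x a (μ x)) : P.pref x (μ x) a := by
  by_cases hfix : μ x = x
  · rw [hfix] at hnot ⊢
    exact absurd (P.worst x a hman) hnot
  · exact (P.total x (μ x) a (hμ.opp x hx hfix) hman ha).resolve_right hnot

theorem IsStable.pref_partner_of_pref_other (hμ : IsStable P A μ) {ν : Agent → Agent}
    (hν : IsMatching man A ν) {x : Agent} (hx : x ∈ A) (hpref : P.pref x (ν x) (μ x)) :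
    P.pref (ν x) (μ (ν x)) (ν (ν x)) := by
  obtain ⟨hμm, hno_block⟩ := hμ
  set w := ν x
  have hw : w ∈ A := hν.mem x hx
  have hwx : w ≠ x := fun h => P.not_pref_self_partner hμm hx (h ▸ hpref)
  have hman : man w ≠ man x := hν.opp x hx hwx
  have hμx : μ x ≠ w := (P.ne_of_pref hpref).symm
  have hμw : μ w ≠ x := fun h => hμx (h ▸ hμm.invol w hw)
  rw [hν.invol x hx]
  exact P.pref_partner_of_not_pref hμm hw hman.symm hμw
    fun hblock => hno_block ⟨x, hx, w, hw, hman.symm, hμx, hpref, hblock⟩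

end Matching

/-- **Key counting lemma.** Let `μ` be a stable matching and `ν` an arbitrary
matching on the same finite set of agents (with strict preferences, every agent
preferring any partner to being unmatched). Then the number of agents who
strictly prefer `ν` to `μ` is at most the number of agents who strictly
prefer `μ` to `ν`. -/
theorem card_prefer_other_le_card_prefer_stable
    {Agent : Type} [Fintype Agent]
    (man : Agent → Bool) (P : Prefs Agent man)
    (μ ν : Agent → Agent)
    (hμ : IsStable P Set.univ μ)
    (hν : IsMatching man Set.univ ν) :
    Nat.card {x : Agent // P.pref x (ν x) (μ x)} ≤
      Nat.card {y : Agent // P.pref y (μ y) (ν y)} := by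
  let partner : {x // P.pref x (ν x) (μ x)} → {y // P.pref y (μ y) (ν y)} :=
    fun x => ⟨ν x, hμ.pref_partner_of_pref_other P hν trivial x.2⟩
  have hpartner : Function.Injective partner :=
    fun x y h => Subtype.ext (hν.involutive.injective (congrArg Subtype.val h))
  exact Nat.card_le_card_of_injective partner hpartner
end

section
/- The one-half bound of the previous result is tight: there exists a society (with two communities, each containing one man and one woman), a strict preference profile, and a stable matching scheme σ* such that exactly half of all agents strictly prefer the partner they obtain in their own community to the partner they obtain in the fully integrated society, i.e. |{x ∈ M^S ∪ W^S : σ*(x, C_x) ≻_x σ*(x, S)}| = |M^S ∪ W^S| / 2. -/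
/-! Take two communities `{m₀, w₀}` and `{m₁, w₁}` in which each man likes the woman of the other
community best and each woman likes the man of her own community best. In the integrated society
the cross matching is stable, since every man gets his first choice; in a single community the
only couple forms. So both women prefer their community's matching and both men the integrated
one: exactly half of the agents. -/

-- A blocking pair always has a member on side `side`, and that member cannot improve.
theorem IsStable.of_forall_weakPref {Agent : Type} {man : Agent → Bool} {P : Prefs Agent man}
    {A : Set Agent} {μ : Agent → Agent} (side : Bool) (hμ : IsMatching man A μ)
    (htop : ∀ x ∈ A, man x = side → ∀ y ∈ A, man y ≠ man x → P.weakPref x (μ x) y) :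
    IsStable P A μ := by
  have no_improvement : ∀ x ∈ A, man x = side → ∀ y ∈ A, man y ≠ man x →
      ¬ P.pref x y (μ x) := by
    intro x hx hside y hy hopp hpref
    rcases htop x hx hside y hy hopp with heq | hlt
    · exact P.irrefl x y (heq ▸ hpref)
    · exact P.irrefl x y (P.trans x y (μ x) y hpref hlt)
  refine ⟨hμ, ?_⟩
  rintro ⟨m, hm, w, hw, hopp, -, hmw, hwm⟩
  by_cases hside : man m = side
  · exact no_improvement m hm hside w hw (Ne.symm hopp) hmw
  · have hw_side : man w = side :=
      (Bool.eq_not_iff.2 hopp.symm).trans (Bool.eq_not_iff.2 (Ne.symm hside)).symm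
    exact no_improvement w hw hw_side m hm hopp hwm

namespace HalfBoundExample

/-- Men `0, 1` and women `2, 3`; community `0` is `{0, 2}` and community `1` is `{1, 3}`. -/
def man : Fin 4 → Bool := ![true, true, false, false]

def comm : Fin 4 → Fin 2 := ![0, 1, 0, 1]

def favorite : Fin 4 → Fin 4 := ![3, 2, 0, 1]

def rank (x a : Fin 4) : ℕ :=
  if a = favorite x then 0 else if man a ≠ man x then 1 else 2

def prefs : Prefs (Fin 4) man where
  pref x a b := rank x a < rank x b
  irrefl := by decide
  trans _ _ _ _ := Nat.lt_trans
  total := by decide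
  worst := by decide

instance (x : Fin 4) : DecidableRel (prefs.pref x) :=
  fun a b => inferInstanceAs (Decidable (rank x a < rank x b))

instance (x : Fin 4) : DecidableRel (prefs.weakPref x) :=
  fun _ _ => inferInstanceAs (Decidable (_ ∨ _))

def crossMatching : Fin 4 → Fin 4 := ![3, 2, 1, 0]

def withinMatching : Fin 4 → Fin 4 := ![2, 3, 0, 1]

/-- The matching of the population made of the communities `i` with `present i`. -/
def matchingOn (present : Fin 2 → Bool) (x : Fin 4) : Fin 4 :=
  if present 0 && present 1 then crossMatching x
  else if present (comm x) then withinMatching x else x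

open Classical in
noncomputable def scheme (x : Fin 4) (Q : Set (Fin 2)) : Fin 4 :=
  matchingOn (fun i => decide (i ∈ Q)) x

theorem existsUnique_comm_man (i : Fin 2) (b : Bool) : ∃! x, comm x = i ∧ man x = b := by
  rw [Fintype.existsUnique_iff_card_one]
  revert i b
  decide

theorem isMatching_matchingOn (present : Fin 2 → Bool) :
    IsMatching man {x | present (comm x)} (matchingOn present) := by
  refine ⟨?_, ?_, ?_, ?_⟩ <;> revert present <;> decide

theorem weakPref_matchingOn_of_man (present : Fin 2 → Bool) :
    ∀ x ∈ {x | present (comm x)}, man x = true →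
      ∀ y ∈ {x | present (comm x)}, man y ≠ man x →
        prefs.weakPref x (matchingOn present x) y := by
  revert present
  decide

open Classical in
theorem isStable_scheme (Q : Set (Fin 2)) :
    IsStable prefs {x | comm x ∈ Q} (fun x => scheme x Q) := by
  let present : Fin 2 → Bool := fun i => decide (i ∈ Q)
  have hpop : {x | comm x ∈ Q} = {x | present (comm x)} := by simp [present]
  rw [hpop]
  exact IsStable.of_forall_weakPref true (isMatching_matchingOn present)
    (weakPref_matchingOn_of_man present)

theorem scheme_own_community (x : Fin 4) : scheme x {comm x} = withinMatching x := by
  fin_cases x <;> simp [scheme, matchingOn, comm, withinMatching]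

theorem scheme_univ (x : Fin 4) : scheme x Set.univ = crossMatching x := by
  simp [scheme, matchingOn]

theorem card_pref_withinMatching_crossMatching :
    Nat.card {x : Fin 4 // prefs.pref x (withinMatching x) (crossMatching x)} = 2 := by
  rw [Nat.card_eq_fintype_card]
  decide

end HalfBoundExample

/-- **The one-half bound of Proposition 3 is tight.** There exists a society with
two pairwise disjoint communities (indexed by `Fin 2`), each containing exactly
one man and exactly one woman, a strict preference profile, and a stable matching
scheme `σ` such that exactly half of all agents strictly prefer the partner
obtained in their own community to the one obtained in the fully integrated
society. -/
theorem half_bound_is_tight :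
    ∃ (man : Fin 4 → Bool) (comm : Fin 4 → Fin 2),
      (∀ i : Fin 2, ∃! x, comm x = i ∧ man x = true) ∧
      (∀ i : Fin 2, ∃! x, comm x = i ∧ man x = false) ∧
      ∃ (P : Prefs (Fin 4) man) (σ : Fin 4 → Set (Fin 2) → Fin 4),
        (∀ Q : Set (Fin 2), IsStable P {x | comm x ∈ Q} (fun x => σ x Q)) ∧
        2 * Nat.card {x : Fin 4 // P.pref x (σ x {comm x}) (σ x Set.univ)} =
          Fintype.card (Fin 4) := by
  open HalfBoundExample in
  exact ⟨man, comm, fun i => existsUnique_comm_man i true, fun i => existsUnique_comm_man i false,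
    prefs, scheme, isStable_scheme, by
      simp only [scheme_own_community, scheme_univ, card_pref_withinMatching_crossMatching,
        Fintype.card_fin]⟩
end

section
/- For every society consisting of at least three pairwise disjoint communities (each community containing at least one man and at least one woman), there exists a strict preference profile such that no Pareto optimal matching scheme is integration monotonic; that is, for every matching scheme σ such that σ(·,P) is a Pareto optimal matching for every population P, there exist disjoint populations P and P' and an agent x ∈ P such that x strictly prefers σ(x,P) to σ(x, P ∪ P'). Equivalently, no Pareto optimal matching mechanism is integration monotonic. -/
/-!
Pick three communities `i₁, i₂, i₃` ordered by the number of couples each can form on its own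
(the size of its shorter gender side), and let every agent rank the communities cyclically:
`i₁` ranks `i₂ > i₃ > i₁`, `i₂` ranks `i₃ > i₁ > i₂` and `i₃` ranks `i₁ > i₂ > i₃`.

A Pareto optimal matching of one community matches its whole short side. When two communities
that prefer each other merge, integration monotonicity keeps the agents matched in the larger
one matched; none of them can be matched inside the larger community, since together with a
couple inside the smaller one the two couples would swap partners to everyone's benefit. So
they all marry into the smaller community, whose short side then has no room for a couple of
its own.

Hence a matched agent of `i₁` of the gender opposite to the short side of `i₂` marries into
`i₂` in `{i₁, i₂}` and, ranking `i₂` first, keeps a partner `z` from `i₂` in `{i₁, i₂, i₃}`.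
But `z`, being on the short side of `i₂`, is matched within `i₂` alone, hence into `i₃` in
`{i₂, i₃}`, and `z` prefers that partner to the one from `i₁`.
-/

namespace Prefs

variable {Agent : Type} {man : Agent → Bool}

theorem asymm (P : Prefs Agent man) {x a b : Agent} (h : P.pref x a b) : ¬ P.pref x b a :=
  fun h' => P.irrefl x a (P.trans x a b a h h')

theorem not_pref_of_weakPref (P : Prefs Agent man) {x a b : Agent} (h : P.weakPref x a b) :
    ¬ P.pref x b a := by
  rcases h with rfl | h
  exacts [P.irrefl x a, P.asymm h]

noncomputable def ofRank [Fintype Agent] {α : Type} [LinearOrder α] (man : Agent → Bool)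
    (rank : Agent → Agent → α) : Prefs Agent man where
  pref x a b := man a ≠ man x ∧
    (man b = man x ∨ toLex (rank x a, Fintype.equivFin Agent a) <
      toLex (rank x b, Fintype.equivFin Agent b))
  irrefl x a h := h.1 (h.2.resolve_right (lt_irrefl _))
  trans x a b c hab hbc := ⟨hab.1, hbc.2.imp_right fun hbc' =>
    (hab.2.resolve_left hbc.1).trans hbc'⟩
  total x a b ha hb hab := by
    rcases lt_trichotomy (toLex (rank x a, Fintype.equivFin Agent a))
      (toLex (rank x b, Fintype.equivFin Agent b)) with h | h | h
    · exact .inl ⟨ha, .inr h⟩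
    · simp only [EmbeddingLike.apply_eq_iff_eq, Prod.mk.injEq] at h
      exact absurd h.2 hab
    · exact .inr ⟨hb, .inr h⟩
  worst x a h := ⟨h, .inl rfl⟩

theorem ofRank_pref [Fintype Agent] {α : Type} [LinearOrder α] {rank : Agent → Agent → α}
    {x a b : Agent} (hx : man a ≠ man x) (h : rank x a < rank x b) :
    (ofRank man rank).pref x a b :=
  ⟨hx, .inr (Prod.Lex.lt_iff.mpr (.inl h))⟩

end Prefs

section Matching

variable {Agent : Type} {man : Agent → Bool} {A : Set Agent} {μ : Agent → Agent}

theorem IsMatching.conj (h : IsMatching man A μ) (τ : Equiv.Perm Agent)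
    (hman : ∀ x, man (τ x) = man x) (hA : ∀ x, τ x ∈ A ↔ x ∈ A) :
    IsMatching man A (τ ∘ μ ∘ τ.symm) := by
  have hA' : ∀ x, τ.symm x ∈ A ↔ x ∈ A := fun x => by simpa using (hA (τ.symm x)).symm
  have hman' : ∀ x, man (τ.symm x) = man x := fun x => by simpa using (hman (τ.symm x)).symm
  refine ⟨fun x hx => ?_, fun x hx => ?_, fun x hx hne => ?_, fun x hx => ?_⟩
  · exact (hA _).2 (h.mem _ ((hA' x).2 hx))
  · simp [h.invol _ ((hA' x).2 hx)]
  · have hne' : μ (τ.symm x) ≠ τ.symm x := fun e => hne (by simp [e])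
    simpa [hman, hman'] using h.opp _ ((hA' x).2 hx) hne'
  · simp [h.fix _ (mt (hA' x).1 hx)]

theorem IsMatching.injOn (h : IsMatching man A μ) : Set.InjOn μ A := fun a ha b hb hab => by
  rw [← h.invol a ha, hab, h.invol b hb]

theorem IsMatching.man_apply (h : IsMatching man A μ) {x : Agent} (hx : x ∈ A) (hxm : μ x ≠ x) :
    man (μ x) = !man x :=
  Bool.eq_not_of_ne (h.opp x hx hxm)

theorem IsMatching.addCouple [DecidableEq Agent] (h : IsMatching man A μ) {m w : Agent}
    (hm : m ∈ A) (hw : w ∈ A) (hg : man w ≠ man m) (hm0 : μ m = m) (hw0 : μ w = w) :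
    IsMatching man A (fun z => if z = m then w else if z = w then m else μ z) where
  mem x hx := by grind [h.mem x hx]
  invol x hx := by grind [h.invol x hx]
  opp x hx hne := by grind [h.opp x hx]
  fix x hx := by grind [h.fix x hx]

variable {P : Prefs Agent man}

theorem IsPareto.eqOn_of_improves (h : IsPareto P A μ) {ν : Agent → Agent}
    (hν : IsMatching man A ν) (himp : ∀ y ∈ A, ν y ≠ μ y → P.pref y (ν y) (μ y)) :
    Set.EqOn ν μ A := by
  by_contra hne
  obtain ⟨y, hy, hne⟩ := Set.not_subset.mp hne
  exact h.2 ⟨ν, hν, fun y hy => or_iff_not_imp_left.2 (himp y hy), y, hy, himp y hy hne⟩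

theorem IsPareto.not_both_unmatched (h : IsPareto P A μ) {m w : Agent} (hm : m ∈ A) (hw : w ∈ A)
    (hg : man w ≠ man m) (hm0 : μ m = m) : μ w ≠ w := by
  classical
  intro hw0
  have hmw : m ≠ w := fun e => hg (congrArg man e).symm
  have := h.eqOn_of_improves (h.1.addCouple hm hw hg hm0 hw0) (fun y _ hy => ?_) hm
  · simp_all
  · grind [P.worst]

theorem IsMatching.weakPref_of_not_pref {B : Set Agent} {ν : Agent → Agent}
    (hμ : IsMatching man A μ) (hν : IsMatching man B ν) {x : Agent} (hxA : x ∈ A) (hxB : x ∈ B)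
    (h : ¬ P.pref x (μ x) (ν x)) : P.weakPref x (ν x) (μ x) := by
  by_cases he : ν x = μ x
  · exact .inl he
  refine .inr ?_
  by_cases hμx : μ x = x
  · rw [hμx] at he ⊢
    exact P.worst x _ (hν.opp x hxB he)
  · have hνx : ν x ≠ x := by
      intro hνx
      rw [hνx] at h
      exact h (P.worst x _ (hμ.opp x hxA hμx))
    exact (P.total x _ _ (hν.opp x hxB hνx) (hμ.opp x hxA hμx) he).resolve_right h

theorem IsPareto.not_swap_improves (h : IsPareto P A μ) {x z : Agent} (hx : x ∈ A) (hz : z ∈ A)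
    (hxm : μ x ≠ x) (hzm : μ z ≠ z) (hg : man z = man x)
    (hx' : P.pref x (μ z) (μ x)) (hz' : P.pref z (μ x) (μ z))
    (hμx : P.pref (μ x) z x) (hμz : P.pref (μ z) x z) : False := by
  classical
  have hxz : x ≠ z := by rintro rfl; exact P.irrefl _ _ hx'
  have hgx := h.1.opp x hx hxm
  have hgz := h.1.opp z hz hzm
  have hix := h.1.invol x hx
  have hiz := h.1.invol z hz
  -- conjugating by the transposition of `x` and `z` exchanges their partners
  have hν := h.1.conj (Equiv.swap x z) (fun y => by grind) (fun y => by grind)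
  have := h.eqOn_of_improves hν (fun y hy hne => ?_) hx
  · simp only [Equiv.symm_swap, Function.comp_apply, Equiv.swap_apply_left] at this
    grind
  · have := h.1.invol y hy
    simp only [Function.comp_apply, Equiv.symm_swap, Equiv.swap_apply_def] at hne ⊢
    grind

end Matching

section Community

open Classical

variable {Agent ι : Type} [Fintype Agent] {man : Agent → Bool} {comm : Agent → ι}

variable (man comm) in
noncomputable def members (i : ι) (g : Bool) : Finset Agent :=
  {a | comm a = i ∧ man a = g}

variable (man comm) in
noncomputable def maxCouples (i : ι) : ℕ :=
  min (members man comm i true).card (members man comm i false).card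

@[simp]
theorem mem_members {i : ι} {g : Bool} {a : Agent} :
    a ∈ members man comm i g ↔ comm a = i ∧ man a = g := by
  simp [members]

theorem maxCouples_le_card_members (i : ι) (g : Bool) :
    maxCouples man comm i ≤ (members man comm i g).card := by
  cases g
  exacts [min_le_right _ _, min_le_left _ _]

theorem exists_card_members_eq_maxCouples (i : ι) :
    ∃ g, (members man comm i g).card = maxCouples man comm i := by
  rcases min_choice (members man comm i true).card (members man comm i false).card with h | h
  exacts [⟨true, h.symm⟩, ⟨false, h.symm⟩]

theorem maxCouples_pos {i : ι} (hm : ∃ x, comm x = i ∧ man x = true)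
    (hw : ∃ x, comm x = i ∧ man x = false) : 0 < maxCouples man comm i := by
  obtain ⟨m, hm⟩ := hm
  obtain ⟨w, hw⟩ := hw
  exact lt_min (Finset.card_pos.2 ⟨m, mem_members.2 hm⟩) (Finset.card_pos.2 ⟨w, mem_members.2 hw⟩)

variable {P : Prefs Agent man} {i : ι} {μ : Agent → Agent}

theorem IsPareto.maxCouples_le_card_matched (h : IsPareto P {x | comm x ∈ ({i} : Set ι)} μ)
    (g : Bool) : maxCouples man comm i ≤ {a ∈ members man comm i g | μ a ≠ a}.card := by
  have hA : ∀ a, comm a = i → a ∈ {x | comm x ∈ ({i} : Set ι)} := by simp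
  have hmaps : Set.MapsTo μ ({a ∈ members man comm i (!g) | μ a ≠ a} : Finset Agent)
      ({a ∈ members man comm i g | μ a ≠ a} : Finset Agent) := by
    intro a ha
    simp only [Finset.coe_filter, mem_members, Set.mem_ofPred_eq] at ha ⊢
    obtain ⟨⟨hai, hag⟩, ham⟩ := ha
    refine ⟨⟨by simpa using h.1.mem a (hA a hai), ?_⟩, ?_⟩
    · simp [h.1.man_apply (hA a hai) ham, hag]
    · rw [h.1.invol a (hA a hai)]
      exact Ne.symm ham
  have hinj : Set.InjOn μ ({a ∈ members man comm i (!g) | μ a ≠ a} : Finset Agent) :=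
    h.1.injOn.mono fun a ha => hA a (by simp_all)
  by_cases hall : ∀ a ∈ members man comm i g, μ a ≠ a
  · rw [Finset.filter_eq_self.2 hall]
    exact maxCouples_le_card_members i g
  · push Not at hall
    obtain ⟨a, ha, ha0⟩ := hall
    rw [mem_members] at ha
    have hall' : ∀ b ∈ members man comm i (!g), μ b ≠ b := by
      intro b hb
      rw [mem_members] at hb
      exact h.not_both_unmatched (hA a ha.1) (hA b hb.1) (by simp [ha.2, hb.2]) ha0
    calc maxCouples man comm i ≤ (members man comm i (!g)).card :=
          maxCouples_le_card_members i !g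
      _ = {a ∈ members man comm i (!g) | μ a ≠ a}.card := by rw [Finset.filter_eq_self.2 hall']
      _ ≤ _ := Finset.card_le_card_of_injOn μ hmaps hinj

theorem IsPareto.matched_of_card_members_eq (h : IsPareto P {x | comm x ∈ ({i} : Set ι)} μ)
    {g : Bool} (hg : (members man comm i g).card = maxCouples man comm i) :
    ∀ a ∈ members man comm i g, μ a ≠ a :=
  Finset.filter_eq_self.1 <| Finset.eq_of_subset_of_card_le (Finset.filter_subset _ _)
    (hg ▸ h.maxCouples_le_card_matched g)

end Community

section CrossPreferences

open Classical

variable {Agent ι : Type} {man : Agent → Bool}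

def PrefersCommunity (P : Prefs Agent man) (comm : Agent → ι) (i j k : ι) : Prop :=
  ∀ x a b, comm x = i → comm a = j → comm b = k → man a ≠ man x → man b ≠ man x → P.pref x a b

theorem prefersCommunity_ofRank [Fintype Agent] {comm : Agent → ι} {r : ι → ι → ℕ} {i j k : ι}
    (h : r i j < r i k) :
    PrefersCommunity (Prefs.ofRank man fun x a => r (comm x) (comm a)) comm i j k := by
  rintro x a b rfl rfl rfl ha -
  exact Prefs.ofRank_pref ha h

variable {comm : Agent → ι} {P : Prefs Agent man} {i j : ι} {μ : Agent → Agent}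

theorem IsPareto.not_couple_within_both {A : Set Agent} (h : IsPareto P A μ)
    (hi : PrefersCommunity P comm i j i) (hj : PrefersCommunity P comm j i j) {x z : Agent}
    (hxA : x ∈ A) (hx : comm x = i) (hxm : μ x ≠ x) (hxi : comm (μ x) = i)
    (hzA : z ∈ A) (hz : comm z = j) (hzm : μ z ≠ z) (hzj : comm (μ z) = j) : False := by
  have hgx := h.1.opp x hxA hxm
  have key : ∀ z ∈ A, man z = man x → comm z = j → μ z ≠ z → comm (μ z) = j → False := by
    intro z hzA hg hz hzm hzj
    have hgz := h.1.opp z hzA hzm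
    exact h.not_swap_improves hxA hzA hxm hzm hg
      (hi _ _ _ hx hzj hxi (by grind) hgx) (hj _ _ _ hz hxi hzj (by grind) hgz)
      (hi _ _ _ hxi hz hx (by grind) (Ne.symm hgx)) (hj _ _ _ hzj hx hz (by grind) (Ne.symm hgz))
  by_cases hg : man z = man x
  · exact key z hzA hg hz hzm hzj
  · refine key (μ z) (h.1.mem z hzA) ?_ hzj ?_ ?_
    · simp [h.1.man_apply hzA hzm, Bool.eq_not_of_ne hg]
    · rw [h.1.invol z hzA]; exact Ne.symm hzm
    · rwa [h.1.invol z hzA]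

variable [Fintype Agent] {μ₀ : Agent → Agent}

theorem IsPareto.no_couple_within (h : IsPareto P {x | comm x ∈ ({i, j} : Set ι)} μ)
    (hij : i ≠ j) (h₀ : IsPareto P {x | comm x ∈ ({j} : Set ι)} μ₀)
    (hstay : ∀ a, comm a = j → μ₀ a ≠ a → μ a ≠ a)
    (hle : maxCouples man comm i ≤ maxCouples man comm j)
    (hi : PrefersCommunity P comm i j i) (hj : PrefersCommunity P comm j i j)
    {x : Agent} (hx : comm x = i) (hxm : μ x ≠ x) : comm (μ x) ≠ i := by
  intro hxi
  have hA : ∀ a, comm a = i ∨ comm a = j → a ∈ {x | comm x ∈ ({i, j} : Set ι)} := by simp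
  obtain ⟨s, hs⟩ := exists_card_members_eq_maxCouples (man := man) (comm := comm) i
  obtain ⟨u, hu, hui⟩ : ∃ u ∈ members man comm i s, comm (μ u) = i := by
    by_cases hxs : man x = s
    · exact ⟨x, mem_members.2 ⟨hx, hxs⟩, hxi⟩
    · have hinv := h.1.invol x (hA x (.inl hx))
      refine ⟨μ x, mem_members.2 ⟨hxi, ?_⟩, by rwa [hinv]⟩
      simp [h.1.man_apply (hA x (.inl hx)) hxm, Bool.eq_not_of_ne hxs]
  have hmaps : Set.MapsTo μ ({a ∈ members man comm j (!s) | μ₀ a ≠ a} : Finset Agent)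
      ((members man comm i s).erase u) := by
    intro a ha
    simp only [Finset.coe_filter, mem_members, Set.mem_ofPred_eq] at ha
    obtain ⟨⟨haj, has⟩, ha₀⟩ := ha
    have haA := hA a (.inr haj)
    have ham := hstay a haj ha₀
    have hμa : comm (μ a) = i := by
      have := h.1.mem a haA
      simp only [Set.mem_ofPred_eq, Set.mem_insert_iff, Set.mem_singleton_iff] at this
      exact this.resolve_right fun hμa => h.not_couple_within_both hi hj (hA x (.inl hx)) hx hxm
        hxi haA haj ham hμa
    simp only [Finset.coe_erase, Set.mem_sdiff, Finset.mem_coe, mem_members,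
      Set.mem_singleton_iff]
    refine ⟨⟨hμa, ?_⟩, fun hau => hij ?_⟩
    · simp [h.1.man_apply haA ham, has]
    · rw [← hui, ← hau, h.1.invol a haA, haj]
  have hinj : Set.InjOn μ ({a ∈ members man comm j (!s) | μ₀ a ≠ a} : Finset Agent) :=
    h.1.injOn.mono fun a ha => hA a (.inr (by simp_all))
  refine lt_irrefl (maxCouples man comm j) ?_
  calc maxCouples man comm j
      _ ≤ ({a ∈ members man comm j (!s) | μ₀ a ≠ a} : Finset Agent).card :=
        h₀.maxCouples_le_card_matched !s
      _ ≤ ((members man comm i s).erase u).card := Finset.card_le_card_of_injOn μ hmaps hinj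
      _ < (members man comm i s).card := Finset.card_erase_lt_of_mem hu
      _ = maxCouples man comm i := hs
      _ ≤ maxCouples man comm j := hle

end CrossPreferences

section Integration

variable {Agent ι : Type} {man : Agent → Bool}

def IsIntegrationMonotonic (P : Prefs Agent man) (comm : Agent → ι)
    (σ : Agent → Set ι → Agent) : Prop :=
  ∀ (Q Q' : Set ι) (x : Agent), Disjoint Q Q' → comm x ∈ Q → ¬ P.pref x (σ x Q) (σ x (Q ∪ Q'))

variable {P : Prefs Agent man} {comm : Agent → ι} {σ : Agent → Set ι → Agent}

theorem IsIntegrationMonotonic.weakPref_of_subset (hIM : IsIntegrationMonotonic P comm σ)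
    (hσ : ∀ Q, IsPareto P {x | comm x ∈ Q} (fun x => σ x Q)) {Q Q' : Set ι} (hQ : Q ⊆ Q')
    {x : Agent} (hx : comm x ∈ Q) : P.weakPref x (σ x Q') (σ x Q) := by
  have h := hIM Q (Q' \ Q) x disjoint_sdiff_self_right hx
  rw [Set.union_sdiff_cancel hQ] at h
  exact (hσ Q).1.weakPref_of_not_pref (hσ Q').1 hx (hQ hx) h

theorem IsIntegrationMonotonic.matched_of_subset (hIM : IsIntegrationMonotonic P comm σ)
    (hσ : ∀ Q, IsPareto P {x | comm x ∈ Q} (fun x => σ x Q)) {Q Q' : Set ι} (hQ : Q ⊆ Q')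
    {x : Agent} (hx : comm x ∈ Q) (hxm : σ x Q ≠ x) : σ x Q' ≠ x := by
  intro hx'
  have h := hIM.weakPref_of_subset hσ hQ hx
  rw [hx'] at h
  exact P.not_pref_of_weakPref h (P.worst x _ ((hσ Q).1.opp x hx hxm))

theorem IsIntegrationMonotonic.comm_partner_eq_of_merge [Fintype Agent]
    (hIM : IsIntegrationMonotonic P comm σ)
    (hσ : ∀ Q, IsPareto P {x | comm x ∈ Q} (fun x => σ x Q)) {i j : ι} (hij : i ≠ j)
    (hle : maxCouples man comm i ≤ maxCouples man comm j)
    (hi : PrefersCommunity P comm i j i) (hj : PrefersCommunity P comm j i j)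
    {x : Agent} (hx : comm x = i) (hxm : σ x {i, j} ≠ x) : comm (σ x {i, j}) = j := by
  have := (hσ {i, j}).1.mem x (by simp [hx])
  simp only [Set.mem_ofPred_eq, Set.mem_insert_iff, Set.mem_singleton_iff] at this
  exact this.resolve_left ((hσ {i, j}).no_couple_within hij (hσ {j})
    (fun a ha => hIM.matched_of_subset hσ (by simp) (by simp [ha])) hle hi hj hx hxm)

end Integration

section Cycle

open Classical

variable {Agent ι : Type} [Fintype Agent] {man : Agent → Bool} {comm : Agent → ι}
  {P : Prefs Agent man} {σ : Agent → Set ι → Agent}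

theorem not_isIntegrationMonotonic_of_cyclic
    (hσ : ∀ Q, IsPareto P {x | comm x ∈ Q} (fun x => σ x Q)) {i₁ i₂ i₃ : ι}
    (h₁₂ : i₁ ≠ i₂) (h₂₃ : i₂ ≠ i₃) (hpos : 0 < maxCouples man comm i₁)
    (hle₁₂ : maxCouples man comm i₁ ≤ maxCouples man comm i₂)
    (hle₂₃ : maxCouples man comm i₂ ≤ maxCouples man comm i₃)
    (p₁₂₁ : PrefersCommunity P comm i₁ i₂ i₁) (p₁₂₃ : PrefersCommunity P comm i₁ i₂ i₃)
    (p₂₁₂ : PrefersCommunity P comm i₂ i₁ i₂) (p₂₃₂ : PrefersCommunity P comm i₂ i₃ i₂)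
    (p₂₃₁ : PrefersCommunity P comm i₂ i₃ i₁) (p₃₂₃ : PrefersCommunity P comm i₃ i₂ i₃) :
    ¬ IsIntegrationMonotonic P comm σ := by
  intro hIM
  have hsub₁₂ : ({i₁, i₂} : Set ι) ⊆ {i₁, i₂, i₃} := Set.insert_subset_insert (by simp)
  obtain ⟨s, hs⟩ := exists_card_members_eq_maxCouples (man := man) (comm := comm) i₂
  obtain ⟨x, hx⟩ := Finset.card_pos.1 (hpos.trans_le ((hσ {i₁}).maxCouples_le_card_matched !s))
  rw [Finset.mem_filter, mem_members] at hx
  obtain ⟨⟨hx₁, hxs⟩, hxm⟩ := hx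
  have hx₁₂ : σ x {i₁, i₂} ≠ x := hIM.matched_of_subset hσ (by simp) (by simp [hx₁]) hxm
  have hy := hIM.comm_partner_eq_of_merge hσ h₁₂ hle₁₂ p₁₂₁ p₂₁₂ hx₁ hx₁₂
  have hxz := hIM.weakPref_of_subset hσ hsub₁₂ (x := x) (by simp [hx₁])
  have hzm : σ x {i₁, i₂, i₃} ≠ x := hIM.matched_of_subset hσ hsub₁₂ (by simp [hx₁]) hx₁₂
  have hz : comm (σ x {i₁, i₂, i₃}) = i₂ := by
    have := (hσ {i₁, i₂, i₃}).1.mem x (by simp [hx₁])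
    have hg := (hσ {i₁, i₂, i₃}).1.opp x (by simp [hx₁]) hzm
    have hgy := (hσ {i₁, i₂}).1.opp x (by simp [hx₁]) hx₁₂
    simp only [Set.mem_ofPred_eq, Set.mem_insert_iff, Set.mem_singleton_iff] at this
    rcases this with h | h | h
    · exact absurd (p₁₂₁ _ _ _ hx₁ hy h hgy hg) (P.not_pref_of_weakPref hxz)
    · exact h
    · exact absurd (p₁₂₃ _ _ _ hx₁ hy h hgy hg) (P.not_pref_of_weakPref hxz)
  set z := σ x {i₁, i₂, i₃}
  have hzs : man z = s := by simp [z, (hσ _).1.man_apply (by simp [hx₁]) hzm, hxs]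
  have hz₂ : σ z {i₂} ≠ z := (hσ {i₂}).matched_of_card_members_eq hs z (mem_members.2 ⟨hz, hzs⟩)
  have hz₂₃ : σ z {i₂, i₃} ≠ z := hIM.matched_of_subset hσ (by simp) (by simp [hz]) hz₂
  have hv := hIM.comm_partner_eq_of_merge hσ h₂₃ hle₂₃ p₂₃₂ p₃₂₃ hz hz₂₃
  have hzx : σ z {i₁, i₂, i₃} = x := (hσ _).1.invol x (by simp [hx₁])
  have hzw := hIM.weakPref_of_subset hσ (x := z)
    (show ({i₂, i₃} : Set ι) ⊆ {i₁, i₂, i₃} by simp) (by simp [hz])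
  rw [hzx] at hzw
  refine P.not_pref_of_weakPref hzw (p₂₃₁ _ _ _ hz hv hx₁ ?_ ?_)
  · exact (hσ {i₂, i₃}).1.opp z (by simp [hz]) hz₂₃
  · simp [hzs, hxs]

end Cycle

theorem exists_three_ne_monotone {ι : Type} [Fintype ι] (f : ι → ℕ) (hι : 3 ≤ Fintype.card ι) :
    ∃ i₁ i₂ i₃ : ι, i₁ ≠ i₂ ∧ i₁ ≠ i₃ ∧ i₂ ≠ i₃ ∧ f i₁ ≤ f i₂ ∧ f i₂ ≤ f i₃ := by
  classical
  obtain ⟨i₁, -, h₁⟩ := Finset.univ.exists_min_image f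
    (Finset.card_pos.1 (by rw [Finset.card_univ]; omega))
  obtain ⟨i₂, hi₂, h₂⟩ := (Finset.univ.erase i₁).exists_min_image f <| Finset.card_pos.1 <| by
    rw [Finset.card_erase_of_mem (Finset.mem_univ _), Finset.card_univ]
    omega
  obtain ⟨i₃, hi₃⟩ : ((Finset.univ.erase i₁).erase i₂).Nonempty := Finset.card_pos.1 <| by
    rw [Finset.card_erase_of_mem hi₂, Finset.card_erase_of_mem (Finset.mem_univ _),
      Finset.card_univ]
    omega
  simp only [Finset.mem_erase, Finset.mem_univ, and_true] at hi₂ hi₃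
  exact ⟨i₁, i₂, i₃, Ne.symm hi₂, Ne.symm hi₃.2, Ne.symm hi₃.1, h₁ i₂ (Finset.mem_univ _),
    h₂ i₃ (by simp [hi₃.2])⟩

/-- Communities labelled `0, 1, 2` in cyclic order rank the next one first, the one after
second and their own last. -/
def cyclicRank {ι : Type} (label : ι → ZMod 3) (i j : ι) : ℕ :=
  (label j - label i - 1).val

/-- **Proposition 2 (no Pareto optimal matching mechanism is IM).**
For every society consisting of at least three pairwise disjoint communities
(indexed by `ι`, each containing at least one man and at least one woman),
there exists a strict preference profile such that for every Pareto optimal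
matching scheme `σ` there are disjoint populations `Q, Q'` and an agent `x`
belonging to (a community of) `Q` who strictly prefers `σ (x, Q)` to
`σ (x, Q ∪ Q')`. -/
theorem no_pareto_scheme_is_integration_monotonic
    {Agent ι : Type} [Fintype Agent] [Fintype ι]
    (man : Agent → Bool) (comm : Agent → ι)
    (hasMan : ∀ i : ι, ∃ x, comm x = i ∧ man x = true)
    (hasWoman : ∀ i : ι, ∃ x, comm x = i ∧ man x = false)
    (hκ : 3 ≤ Fintype.card ι) :
    ∃ P : Prefs Agent man,
      ∀ σ : Agent → Set ι → Agent,
        (∀ Q : Set ι, IsPareto P {x | comm x ∈ Q} (fun x => σ x Q)) →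
        ∃ (Q Q' : Set ι) (x : Agent), Disjoint Q Q' ∧ comm x ∈ Q ∧
          P.pref x (σ x Q) (σ x (Q ∪ Q')) := by
  classical
  obtain ⟨i₁, i₂, i₃, h₁₂, h₁₃, h₂₃, hle₁₂, hle₂₃⟩ :=
    exists_three_ne_monotone (maxCouples man comm) hκ
  let label : ι → ZMod 3 := fun i => if i = i₁ then 0 else if i = i₂ then 1 else 2
  have l₁ : label i₁ = 0 := by simp [label]
  have l₂ : label i₂ = 1 := by simp [label, h₁₂.symm]
  have l₃ : label i₃ = 2 := by simp [label, h₁₃.symm, h₂₃.symm]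
  refine ⟨Prefs.ofRank man fun x a => cyclicRank label (comm x) (comm a), fun σ hσ => ?_⟩
  by_contra hIM
  refine not_isIntegrationMonotonic_of_cyclic hσ h₁₂ h₂₃ (maxCouples_pos (hasMan i₁) (hasWoman i₁))
    hle₁₂ hle₂₃ ?_ ?_ ?_ ?_ ?_ ?_ fun Q Q' x hQ hx hx' => hIM ⟨Q, Q', x, hQ, hx, hx'⟩ <;>
  exact prefersCommunity_ofRank (by simp only [cyclicRank, l₁, l₂, l₃]; decide)
end

section
/- For every society (any finite collection of pairwise disjoint communities) and every strict preference profile, there exists a matching scheme σ that is both Pareto optimal (σ(·,P) is a Pareto optimal matching for every population P) and weakly integration monotonic (every agent x weakly prefers σ(x,S) to σ(x,C_x)). -/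
open Finset

namespace Prefs

variable {Agent : Type} {man : Agent → Bool} (P : Prefs Agent man)

theorem weakPref_refl (x a : Agent) : P.weakPref x a a := Or.inl rfl

theorem weakPref_trans {x a b c : Agent} (hab : P.weakPref x a b) (hbc : P.weakPref x b c) :
    P.weakPref x a c := by
  rcases hab with rfl | hab
  · exact hbc
  rcases hbc with rfl | hbc
  · exact Or.inr hab
  · exact Or.inr (P.trans _ _ _ _ hab hbc)

variable [Fintype Agent]

open Classical in
noncomputable def rank (x a : Agent) : ℕ := #{b | P.pref x a b}

theorem rank_lt_rank {x a b : Agent} (hab : P.pref x a b) : P.rank x b < P.rank x a := by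
  classical
  refine card_lt_card ((ssubset_iff_of_subset fun c hc => ?_).mpr ⟨b, ?_, ?_⟩)
  · simp only [mem_filter, mem_univ, true_and] at hc ⊢
    exact P.trans x a b c hab hc
  · simpa using hab
  · simpa using P.irrefl x b

theorem rank_le_rank {x a b : Agent} (hab : P.weakPref x a b) : P.rank x b ≤ P.rank x a := by
  rcases hab with rfl | hab
  · exact le_rfl
  · exact (P.rank_lt_rank hab).le

noncomputable def welfare (μ : Agent → Agent) : ℕ := ∑ x, P.rank x (μ x)

/-- Outside `A` both matchings are the identity, so a Pareto improvement on `A` raises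
the welfare summed over all agents. -/
theorem welfare_lt_welfare {A : Set Agent} {μ μ' : Agent → Agent}
    (hμ : IsMatching man A μ) (hμ' : IsMatching man A μ')
    (hweak : ∀ x ∈ A, P.weakPref x (μ' x) (μ x)) (hstrict : ∃ y ∈ A, P.pref y (μ' y) (μ y)) :
    P.welfare μ < P.welfare μ' := by
  obtain ⟨y, hy, hy_pref⟩ := hstrict
  refine sum_lt_sum (fun x _ => ?_) ⟨y, mem_univ y, P.rank_lt_rank hy_pref⟩
  by_cases hx : x ∈ A
  · exact P.rank_le_rank (hweak x hx)
  · rw [hμ.fix x hx, hμ'.fix x hx]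

theorem exists_isPareto_forall_weakPref {A : Set Agent} {μ₀ : Agent → Agent}
    (h₀ : IsMatching man A μ₀) :
    ∃ μ, IsPareto P A μ ∧ ∀ x ∈ A, P.weakPref x (μ x) (μ₀ x) := by
  classical
  obtain ⟨μ, ⟨hμ, hμ_ge⟩, hmax⟩ := Set.exists_max_image
    {μ | IsMatching man A μ ∧ ∀ x ∈ A, P.weakPref x (μ x) (μ₀ x)} P.welfare (Set.toFinite _)
    ⟨μ₀, h₀, fun x _ => P.weakPref_refl x (μ₀ x)⟩
  refine ⟨μ, ⟨hμ, ?_⟩, hμ_ge⟩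
  rintro ⟨μ', hμ', hweak, hstrict⟩
  have hμ'_ge : ∀ x ∈ A, P.weakPref x (μ' x) (μ₀ x) :=
    fun x hx => P.weakPref_trans (hweak x hx) (hμ_ge x hx)
  exact (hmax μ' ⟨hμ', hμ'_ge⟩).not_gt (P.welfare_lt_welfare hμ hμ' hweak hstrict)

end Prefs

namespace IsMatching

variable {Agent : Type} {man : Agent → Bool}

protected theorem id (A : Set Agent) : IsMatching man A id :=
  ⟨fun _ hx => hx, fun _ _ => rfl, fun _ _ h => absurd rfl h, fun _ _ => rfl⟩

theorem glue {ι : Type} (comm : Agent → ι) {ν : ι → Agent → Agent}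
    (hν : ∀ i, IsMatching man {x | comm x = i} (ν i)) :
    IsMatching man Set.univ (fun x => ν (comm x) x) where
  mem _ _ := trivial
  invol x _ := by
    have hcomm : comm (ν (comm x) x) = comm x := (hν (comm x)).mem x rfl
    simp only [hcomm]
    exact (hν (comm x)).invol x rfl
  opp x _ := (hν (comm x)).opp x rfl
  fix _ hx := absurd trivial hx

end IsMatching

theorem exists_pareto_and_WIM_scheme_general
    {Agent ι : Type} [Fintype Agent]
    (man : Agent → Bool) (comm : Agent → ι)
    (P : Prefs Agent man) :
    ∃ σ : Agent → Set ι → Agent,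
      (∀ Q : Set ι, IsPareto P {x | comm x ∈ Q} (fun x => σ x Q)) ∧
      (∀ x : Agent, P.weakPref x (σ x Set.univ) (σ x {comm x})) := by
  classical
  choose ν hν using fun Q : Set ι =>
    P.exists_isPareto_forall_weakPref (IsMatching.id (man := man) {x | comm x ∈ Q})
  obtain ⟨μ, hμ, hμ_ge⟩ := P.exists_isPareto_forall_weakPref
    (A := {x | comm x ∈ Set.univ}) (IsMatching.glue comm fun i => (hν {i}).1.1)
  refine ⟨fun x Q => if Q = Set.univ then μ x else ν Q x, fun Q => ?_, fun x => ?_⟩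
  · by_cases hQ : Q = Set.univ
    · subst hQ
      simpa only [if_true] using hμ
    · simpa only [hQ, if_false] using (hν Q).1
  · by_cases hx : ({comm x} : Set ι) = Set.univ
    · simpa only [hx, if_true] using P.weakPref_refl x (μ x)
    · simpa only [hx, if_true, if_false] using hμ_ge x trivial

/-- **Pareto optimal and WIM matching schemes always exist.** For every society
(any finite collection of pairwise disjoint communities, each with at least one
man and one woman) and every strict preference profile, there is a matching
scheme `σ` that is Pareto optimal for every population and weakly integration
monotonic: every agent weakly prefers the partner obtained in the full society
to the partner obtained in his or her own community. -/
theorem exists_pareto_and_WIM_scheme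
    {Agent ι : Type} [Fintype Agent] [Fintype ι]
    (man : Agent → Bool) (comm : Agent → ι)
    (hasMan : ∀ i : ι, ∃ x, comm x = i ∧ man x = true)
    (hasWoman : ∀ i : ι, ∃ x, comm x = i ∧ man x = false)
    (P : Prefs Agent man) :
    ∃ σ : Agent → Set ι → Agent,
      (∀ Q : Set ι, IsPareto P {x | comm x ∈ Q} (fun x => σ x Q)) ∧
      (∀ x : Agent, P.weakPref x (σ x Set.univ) (σ x {comm x})) :=
  exists_pareto_and_WIM_scheme_general man comm P
end
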